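/- In any Littlewood-Richardson tableau of shape (□_{l,d}+λ)/(□_{n,d}+ν) with content □_{m,d}+μ, where l = m+n, l ≥ ℓ(λ), m ≥ ℓ(μ), n ≥ ℓ(ν), the m×d rectangle occupying columns 1 through d and rows n+1 through l is 'frozen': each of its d columns is filled with the entries 1, 2, …, m in order. -/

import Mathlib

/-- A partition: a weakly decreasing sequence of natural numbers with finitely many nonzero
terms, recorded as a function `ℕ → ℕ` giving the (0-indexed) parts.  Partitions differing
only in trailing zeros are identified. -/
structure YPartition where
  f : ℕ → ℕ
  antitone : Antitone f
  eventually_zero : ∃ N, ∀ n, N ≤ n → f n = 0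

namespace YPartition

/-- The empty partition `∅`. -/
def empty : YPartition := ⟨fun _ => 0, fun _ _ _ => le_rfl, 0, fun _ _ => rfl⟩

/-- Entrywise sum `μ + ν` of partitions: `(μ + ν)_k = μ_k + ν_k`. -/
noncomputable instance : Add YPartition :=
  ⟨fun p q =>
    ⟨fun i => p.f i + q.f i, fun _ _ h => Nat.add_le_add (p.antitone h) (q.antitone h), by
      obtain ⟨N, hN⟩ := p.eventually_zero
      obtain ⟨M, hM⟩ := q.eventually_zero
      refine ⟨max N M, fun n hn => ?_⟩
      show p.f n + q.f n = 0
      rw [hN n (le_trans (le_max_left _ _) hn), hM n (le_trans (le_max_right _ _) hn)]⟩⟩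

/-- The size `|λ|` of a partition: the sum of its parts. -/
noncomputable def size (p : YPartition) : ℕ := ∑' i, p.f i

/-- The partial sum `|λ|_k = λ_1 + ⋯ + λ_k`. -/
def psum (p : YPartition) (k : ℕ) : ℕ := ∑ i ∈ Finset.range k, p.f i

/-- The length `ℓ(λ)`: the number of nonzero parts. -/
noncomputable def len (p : YPartition) : ℕ := sInf {N | p.f N = 0}

lemma support_finite (p : YPartition) (j : ℕ) : {i | j + 1 ≤ p.f i}.Finite := by
  obtain ⟨N, hN⟩ := p.eventually_zero
  refine (Set.finite_Iio N).subset fun i hi => ?_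
  simp only [Set.mem_setOf_eq] at hi
  simp only [Set.mem_Iio]
  by_contra h
  push_neg at h
  rw [hN i h] at hi
  omega

/-- The conjugate partition `λ'`: `λ'_j = #{i : λ_i ≥ j}` (transpose of the Young diagram). -/
noncomputable def conj (p : YPartition) : YPartition where
  f := fun j => {i | j + 1 ≤ p.f i}.ncard
  antitone := by
    intro j j' h
    exact Set.ncard_le_ncard (fun i hi => le_trans (by omega : j + 1 ≤ j' + 1) hi)
      (p.support_finite j)
  eventually_zero := by
    refine ⟨p.f 0, fun n hn => ?_⟩
    show {i | n + 1 ≤ p.f i}.ncard = 0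
    have : {i | n + 1 ≤ p.f i} = ∅ := by
      ext i
      simp only [Set.mem_setOf_eq, Set.mem_empty_iff_false, iff_false]
      have := p.antitone (Nat.zero_le i)
      omega
    rw [this, Set.ncard_empty]

/-- The rectangular partition `□_{a,b}` with `a` parts each equal to `b`. -/
def rect (a b : ℕ) : YPartition where
  f := fun i => if i < a then b else 0
  antitone := by
    intro i j hij
    dsimp only
    split_ifs <;> omega
  eventually_zero := ⟨a, fun n hn => by simp [Nat.not_lt_of_le hn]⟩

/-- The concatenation `(□_{a,d} + μ, α)`: the first `a` parts are `d + μ_k`, followed by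
the parts of `α` (requiring `α_1 ≤ d`). -/
def rectConcat (a d : ℕ) (μ α : YPartition) (hα : α.f 0 ≤ d) : YPartition where
  f := fun i => if i < a then d + μ.f i else α.f (i - a)
  antitone := by
    intro x y hxy
    dsimp only
    split_ifs with hy hx hx
    · exact Nat.add_le_add_left (μ.antitone hxy) d
    · exact absurd hy (by omega)
    · exact le_trans (le_trans (α.antitone (Nat.zero_le _)) hα) (Nat.le_add_right d _)
    · exact α.antitone (by omega)
  eventually_zero := by
    obtain ⟨N, hN⟩ := α.eventually_zero
    refine ⟨a + N, fun n hn => ?_⟩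
    show (if n < a then d + μ.f n else α.f (n - a)) = 0
    rw [if_neg (by omega)]
    exact hN _ (by omega)

/-- The partition `□_{a,d} + μ`, adding `d` to each of the first `a` parts of `μ`
(intended for `ℓ(μ) ≤ a`). -/
def rectAdd (a d : ℕ) (μ : YPartition) : YPartition :=
  rectConcat a d μ empty (Nat.zero_le d)

/-- The complement `λ^∨` of `λ` inside the rectangle `□_{a,b}`:
`(λ^∨)_i = b - λ_{a+1-i}` (intended for `λ ⊆ □_{a,b}`). -/
def compl (a b : ℕ) (p : YPartition) : YPartition where
  f := fun i => if i < a then b - p.f (a - 1 - i) else 0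
  antitone := by
    intro x y hxy
    dsimp only
    split_ifs with hy hx hx
    · exact Nat.sub_le_sub_left (p.antitone (by omega)) b
    · exact absurd hy (by omega)
    · exact Nat.zero_le _
    · exact le_rfl
  eventually_zero := ⟨a, fun n hn => by simp [Nat.not_lt_of_le hn]⟩

/-- The list of (nonzero) parts of a partition. -/
noncomputable def toList (p : YPartition) : List ℕ := (List.range p.len).map p.f

/-- The partition `(μ, ν)`: the decreasing rearrangement of the concatenation of the
parts of `μ` and of `ν`. -/
noncomputable def sortedConcat (p q : YPartition) : YPartition where
  f := fun i => ((p.toList ++ q.toList).mergeSort (fun x y => decide (y ≤ x))).getD i 0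
  antitone := by
    intro x y hxy
    dsimp only
    set L := (p.toList ++ q.toList).mergeSort (fun x y => decide (y ≤ x)) with hL
    have hs : List.Pairwise (fun a b : ℕ => b ≤ a) L := by
      have := List.pairwise_mergeSort (le := fun x y : ℕ => decide (y ≤ x))
        (fun a b c hab hbc => by simp at hab hbc ⊢; omega)
        (fun a b => by simp; omega) (p.toList ++ q.toList)
      simpa using this
    by_cases hy : y < L.length
    · have hx : x < L.length := lt_of_le_of_lt hxy hy
      rcases eq_or_lt_of_le hxy with h | h
      · subst h; exact le_rfl
      · have := (List.pairwise_iff_get.mp hs) ⟨x, hx⟩ ⟨y, hy⟩ h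
        rw [List.getD_eq_getElem L 0 hy, List.getD_eq_getElem L 0 hx]
        simpa [List.get] using this
    · rw [List.getD_eq_default L 0 (by omega)]
      exact Nat.zero_le _
  eventually_zero :=
    ⟨((p.toList ++ q.toList).mergeSort (fun x y => decide (y ≤ x))).length,
      fun n hn => List.getD_eq_default _ 0 hn⟩


lemma compl_f_le (a b : ℕ) (p : YPartition) (i : ℕ) : (compl a b p).f i ≤ b := by
  show (if i < a then b - p.f (a - 1 - i) else 0) ≤ b
  split_ifs <;> omega

lemma rect_f_le (a b i : ℕ) : (rect a b).f i ≤ b := by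
  show (if i < a then b else 0) ≤ b
  split_ifs <;> omega

end YPartition

open YPartition

/-- The cells of the skew diagram `λ/ν`: row `i`, columns `ν_i ≤ j < λ_i` (0-indexed). -/
def skewCells (lam nu : YPartition) : Set (ℕ × ℕ) :=
  {p | nu.f p.1 ≤ p.2 ∧ p.2 < lam.f p.1}

/-- A Littlewood–Richardson skew tableau of shape `λ/ν` and content `μ`: a filling of the
skew diagram `λ/ν` by positive integers, weakly increasing along rows and strictly
increasing down columns, in which `k` occurs `μ_k` times, and whose right-to-left,
top-to-bottom reading word has the lattice property (every initial segment of the word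
contains at least as many `k`'s as `(k+1)`'s). -/
structure LRTableau (lam nu mu : YPartition) where
  entry : ℕ × ℕ → ℕ
  zero_outside : ∀ p, p ∉ skewCells lam nu → entry p = 0
  pos : ∀ p ∈ skewCells lam nu, 0 < entry p
  row_weak : ∀ i j j', (i, j) ∈ skewCells lam nu → (i, j') ∈ skewCells lam nu →
    j ≤ j' → entry (i, j) ≤ entry (i, j')
  col_strict : ∀ i i' j, (i, j) ∈ skewCells lam nu → (i', j) ∈ skewCells lam nu →
    i < i' → entry (i, j) < entry (i', j)
  content : ∀ k, {p ∈ skewCells lam nu | entry p = k + 1}.ncard = mu.f k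
  lattice : ∀ i j k,
    {p ∈ skewCells lam nu | entry p = k + 2 ∧ (p.1 < i ∨ (p.1 = i ∧ j ≤ p.2))}.ncard ≤
    {p ∈ skewCells lam nu | entry p = k + 1 ∧ (p.1 < i ∨ (p.1 = i ∧ j ≤ p.2))}.ncard

/-- The Littlewood–Richardson coefficient `c^λ_{μ,ν}`: the number of Littlewood–Richardson
skew tableaux of shape `λ/ν` and content `μ`; equivalently, the coefficient of the Schur
function `S_λ` in the product `S_μ · S_ν`. -/
noncomputable def lrCoeff (lam mu nu : YPartition) : ℕ := Nat.card (LRTableau lam nu mu)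

open Classical in
/-- The coefficient of the Schur function `S_λ` in a product `S_{μ^1} ⋯ S_{μ^r}` of Schur
functions, via iterated Littlewood–Richardson expansion:
`c^λ_{μ̲} = Σ_κ c^κ_{(μ^2,…,μ^r)} · c^λ_{μ^1,κ}`. -/
noncomputable def multiCoeff : List YPartition → YPartition → ℕ
  | [], lam => if lam = YPartition.empty then 1 else 0
  | mu :: rest, lam => ∑' kappa : YPartition, multiCoeff rest kappa * lrCoeff lam mu kappa


lemma skewCells_finite (lam nu : YPartition) : (skewCells lam nu).Finite := by
  obtain ⟨N, hN⟩ := lam.eventually_zero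
  apply ((Set.finite_Iio N).prod (Set.finite_Iio (lam.f 0))).subset
  rintro ⟨a, b⟩ ⟨h1, h2⟩
  constructor
  · by_contra h
    simp only [Set.mem_Iio, not_lt] at h
    rw [hN a h] at h2
    omega
  · exact lt_of_lt_of_le h2 (lam.antitone (Nat.zero_le _))

/-- In any Littlewood–Richardson tableau of shape `(□_{l,d}+λ)/(□_{n,d}+ν)` with content
`□_{m,d}+μ` (`l = m + n`), the `m × d` rectangle occupying columns `1..d` and rows
`n+1..l` is frozen: each of its columns is filled with `1, 2, …, m` in order
(0-indexed: the cell in row `i`, column `j` has entry `i - n + 1`). -/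
theorem frozen_rectangle (l m n d : ℕ) (lam mu nu : YPartition) (hl : l = m + n)
    (hll : lam.len ≤ l) (hlm : mu.len ≤ m) (hln : nu.len ≤ n)
    (T : LRTableau (YPartition.rectAdd l d lam) (YPartition.rectAdd n d nu)
      (YPartition.rectAdd m d mu))
    (i j : ℕ) (hi : n ≤ i) (hi' : i < l) (hj : j < d) :
    T.entry (i, j) = i - n + 1 := by
  -- all rectangle cells are in the skew diagram
  have hmem : ∀ a b, n ≤ a → a < l → b < d → (a, b) ∈ skewCells (YPartition.rectAdd l d lam) (YPartition.rectAdd n d nu) := by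
    intro a b ha hal hb
    constructor
    · show (if a < n then d + nu.f a else YPartition.empty.f (a - n)) ≤ b
      rw [if_neg (by omega)]
      exact Nat.zero_le b
    · show b < (if a < l then d + lam.f a else YPartition.empty.f (a - l))
      rw [if_pos hal]
      omega
  -- all entries are at most m
  have hfin := skewCells_finite (YPartition.rectAdd l d lam) (YPartition.rectAdd n d nu)
  have hle : ∀ p ∈ skewCells (YPartition.rectAdd l d lam) (YPartition.rectAdd n d nu), T.entry p ≤ m := by
    intro p hp
    by_contra h
    push_neg at h
    have hc := T.content (T.entry p - 1)
    have hz : (YPartition.rectAdd m d mu).f (T.entry p - 1) = 0 := by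
      show (if T.entry p - 1 < m then d + mu.f _ else YPartition.empty.f _) = 0
      rw [if_neg (by omega)]
      rfl
    rw [hz] at hc
    have hempty : {q ∈ skewCells (YPartition.rectAdd l d lam) (YPartition.rectAdd n d nu) | T.entry q = (T.entry p - 1) + 1} = ∅ :=
      (Set.ncard_eq_zero (hfin.subset fun q hq => hq.1)).mp hc
    have hpe : p ∈ {q ∈ skewCells (YPartition.rectAdd l d lam) (YPartition.rectAdd n d nu) | T.entry q = (T.entry p - 1) + 1} :=
      ⟨hp, by omega⟩
    rw [hempty] at hpe
    exact hpe
  -- chain along a column: entries increase by at least 1 per row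
  have chain : ∀ b, b < d → ∀ k a, n ≤ a → a + k < l →
      T.entry (a, b) + k ≤ T.entry (a + k, b) := by
    intro b hb k
    induction k with
    | zero => intro a _ _; simp
    | succ k ih =>
      intro a ha hak
      have h1 := ih a ha (by omega)
      have h2 := T.col_strict (a + k) (a + k + 1) b
        (hmem _ _ (by omega) (by omega) hb)
        (hmem _ _ (by omega) (by omega) hb) (by omega)
      have : a + (k + 1) = a + k + 1 := by omega
      rw [this]
      omega
  -- lower bound: entry (i, j) ≥ i - n + 1
  have hlow : i - n + 1 ≤ T.entry (i, j) := by
    have h1 := T.pos (n, j) (hmem n j le_rfl (by omega) hj)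
    have h2 := chain j hj (i - n) n le_rfl (by omega)
    have : n + (i - n) = i := by omega
    rw [this] at h2
    omega
  -- upper bound using the last row
  have hup : T.entry (i, j) ≤ i - n + 1 := by
    have h2 := chain j hj (l - 1 - i) i hi (by omega)
    have h3 := hle (i + (l - 1 - i), j)
      (hmem _ _ (by omega) (by omega) hj)
    omega
  omega
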